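/- arXiv:1911.11246 — 2 statements merged into one kernel-verified Lean document; each statement's English description precedes it below -/
import Mathlib

section
/- Let n > 1 and let a_0,...,a_{n-1} be i.i.d. uniform on {1,-1}, with C_u = Σ_{j=0}^{u-1} a_j a_{j+n-u}. Then Σ_{u,v=1}^{n-1} E(C_u²C_v²) = n²(n-1)²/4 + (4/3)n³ - 5n² + (14/3)n - (1-(-1)ⁿ)/2. -/
set_option linter.unnecessarySeqFocus false
set_option maxHeartbeats 1000000

open Finset

/-- Aperiodic autocorrelation `C_u = ∑_{j=0}^{u-1} a_j a_{j+n-u}` (rational values). -/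
def acorr (n : ℕ) (a : ℕ → ℚ) (u : ℕ) : ℚ :=
  ∑ j ∈ Finset.range u, a j * a (j + (n - u))

/-- Extend a ±1 coefficient vector indexed by `Fin n` (given as Booleans) to `ℕ → ℚ`. -/
def signs (n : ℕ) (a : Fin n → Bool) : ℕ → ℚ :=
  fun j => if h : j < n then (if a ⟨j, h⟩ then 1 else -1) else 0

/-! ### Parity / matching machinery -/

lemma drop_pair (x : ℕ) (p q : List ℕ)
    (h : ∀ i : ℕ, Even ((x :: (p ++ x :: q)).count i)) :
    ∀ i : ℕ, Even ((p ++ q).count i) := by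
  intro i
  have := h i
  rw [List.count_cons, List.count_append, List.count_cons] at this
  rw [List.count_append]
  rcases this with ⟨r, hr⟩
  split_ifs at hr with hx
  · exact ⟨r - 1, by omega⟩
  · exact ⟨r, by omega⟩

lemma first_match (x : ℕ) (p : List ℕ)
    (h : ∀ i : ℕ, Even ((x :: p).count i)) : x ∈ p := by
  have := h x
  rw [List.count_cons_self] at this
  rcases this with ⟨r, hr⟩
  have : 0 < p.count x := by omega
  exact List.count_pos_iff.mp this

lemma classify2 (a b : ℕ) (h : ∀ i : ℕ, Even (([a,b] : List ℕ).count i)) : a = b := by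
  have := first_match a [b] h
  simpa using this

lemma classify4 (a b c d : ℕ) (h : ∀ i : ℕ, Even (([a,b,c,d] : List ℕ).count i)) :
    (a = b ∧ c = d) ∨ (a = c ∧ b = d) ∨ (a = d ∧ b = c) := by
  have h1 := first_match a [b,c,d] h
  simp only [List.mem_cons, List.not_mem_nil, or_false, List.mem_singleton] at h1
  rcases h1 with h1 | h1 | h1
  · rw [h1] at h ⊢
    exact Or.inl ⟨rfl, classify2 c d (drop_pair b [] [c,d] h)⟩
  · rw [h1] at h ⊢
    exact Or.inr (Or.inl ⟨rfl, classify2 b d (drop_pair c [b] [d] h)⟩)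
  · rw [h1] at h ⊢
    exact Or.inr (Or.inr ⟨rfl, classify2 b c (drop_pair d [b,c] [] h)⟩)

lemma classify6 (a b c d e f : ℕ) (h : ∀ i : ℕ, Even (([a,b,c,d,e,f] : List ℕ).count i)) :
    (a = b ∧ ((c = d ∧ e = f) ∨ (c = e ∧ d = f) ∨ (c = f ∧ d = e))) ∨
    (a = c ∧ ((b = d ∧ e = f) ∨ (b = e ∧ d = f) ∨ (b = f ∧ d = e))) ∨
    (a = d ∧ ((b = c ∧ e = f) ∨ (b = e ∧ c = f) ∨ (b = f ∧ c = e))) ∨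
    (a = e ∧ ((b = c ∧ d = f) ∨ (b = d ∧ c = f) ∨ (b = f ∧ c = d))) ∨
    (a = f ∧ ((b = c ∧ d = e) ∨ (b = d ∧ c = e) ∨ (b = e ∧ c = d))) := by
  have h1 := first_match a [b,c,d,e,f] h
  simp only [List.mem_cons, List.not_mem_nil, or_false, List.mem_singleton] at h1
  rcases h1 with h1 | h1 | h1 | h1 | h1
  · rw [h1] at h ⊢
    exact Or.inl ⟨rfl, classify4 c d e f (drop_pair b [] [c,d,e,f] h)⟩
  · rw [h1] at h ⊢
    exact Or.inr (Or.inl ⟨rfl, classify4 b d e f (drop_pair c [b] [d,e,f] h)⟩)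
  · rw [h1] at h ⊢
    exact Or.inr (Or.inr (Or.inl ⟨rfl, classify4 b c e f (drop_pair d [b,c] [e,f] h)⟩))
  · rw [h1] at h ⊢
    exact Or.inr (Or.inr (Or.inr (Or.inl ⟨rfl, classify4 b c d f (drop_pair e [b,c,d] [f] h)⟩)))
  · rw [h1] at h ⊢
    exact Or.inr (Or.inr (Or.inr (Or.inr ⟨rfl, classify4 b c d e (drop_pair f [b,c,d,e] [] h)⟩)))

/-- classification predicate for the even-multiplicity condition -/
def Qpred (d e j k l m : ℕ) : Prop :=
  (j = k ∧ l = m) ∨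
  (d = e ∧ ¬ j = k ∧ ((l = j ∧ m = k) ∨ (l = k ∧ m = j))) ∨
  (¬ d = e ∧ ((k = j + e ∧ ((l = j ∧ m = j + d) ∨ (l = j + d ∧ m = j))) ∨
              (j = k + e ∧ ((l = k ∧ m = k + d) ∨ (l = k + d ∧ m = k)))))

instance Qpred.decidable (d e j k l m : ℕ) : Decidable (Qpred d e j k l m) := by
  unfold Qpred; infer_instance

lemma classify_fwd (d e j k l m : ℕ) (hd : 0 < d) (he : 0 < e)
    (h : ∀ i : ℕ, Even (([j, j+d, k, k+d, l, l+e, m, m+e] : List ℕ).count i)) :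
    Qpred d e j k l m := by
  unfold Qpred
  have h1 := first_match j [j+d,k,k+d,l,l+e,m,m+e] h
  simp only [List.mem_cons, List.not_mem_nil, or_false, List.mem_singleton] at h1
  rcases h1 with h1 | h1 | h1 | h1 | h1 | h1 | h1
  · omega
  · subst h1
    have h4 := classify4 l (l+e) m (m+e)
      (drop_pair (j+d) [] [l,l+e,m,m+e] (drop_pair j [j+d] [j+d,l,l+e,m,m+e] h))
    rcases h4 with ⟨p,q⟩|⟨p,q⟩|⟨p,q⟩ <;> omega
  · rw [← h1] at h
    have h6 := classify6 (j+d) k l (l+e) m (m+e) (drop_pair j [j+d,k] [l,l+e,m,m+e] h)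
    rcases h6 with ⟨p,q|q|q⟩|⟨p,q|q|q⟩|⟨p,q|q|q⟩|⟨p,q|q|q⟩|⟨p,q|q|q⟩ <;> omega
  · subst h1
    have h6 := classify6 (j+d) k (k+d) (j+e) m (m+e)
      (drop_pair j [j+d,k,k+d] [j+e,m,m+e] h)
    rcases h6 with ⟨p,q|q|q⟩|⟨p,q|q|q⟩|⟨p,q|q|q⟩|⟨p,q|q|q⟩|⟨p,q|q|q⟩ <;> omega
  · rw [← h1] at h
    have h6 := classify6 (j+d) k (k+d) l m (m+e) (drop_pair j [j+d,k,k+d,l] [m,m+e] h)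
    rcases h6 with ⟨p,q|q|q⟩|⟨p,q|q|q⟩|⟨p,q|q|q⟩|⟨p,q|q|q⟩|⟨p,q|q|q⟩ <;> omega
  · subst h1
    have h6 := classify6 (j+d) k (k+d) l (l+e) (j+e)
      (drop_pair j [j+d,k,k+d,l,l+e] [j+e] h)
    rcases h6 with ⟨p,q|q|q⟩|⟨p,q|q|q⟩|⟨p,q|q|q⟩|⟨p,q|q|q⟩|⟨p,q|q|q⟩ <;> omega
  · rw [← h1] at h
    have h6 := classify6 (j+d) k (k+d) l (l+e) m (drop_pair j [j+d,k,k+d,l,l+e,m] [] h)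
    rcases h6 with ⟨p,q|q|q⟩|⟨p,q|q|q⟩|⟨p,q|q|q⟩|⟨p,q|q|q⟩|⟨p,q|q|q⟩ <;> omega

lemma classify_bwd (d e j k l m : ℕ) (hd : 0 < d) (he : 0 < e)
    (hq : Qpred d e j k l m) :
    ∀ i : ℕ, Even (([j, j+d, k, k+d, l, l+e, m, m+e] : List ℕ).count i) := by
  unfold Qpred at hq
  rcases hq with ⟨h1, h2⟩ | ⟨h1, _, (⟨h2, h3⟩ | ⟨h2, h3⟩)⟩ |
    ⟨h1, (⟨h2, (⟨h3, h4⟩ | ⟨h3, h4⟩)⟩ | ⟨h2, (⟨h3, h4⟩ | ⟨h3, h4⟩)⟩)⟩ <;>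
    (try subst h1) <;> (try subst h2) <;> (try subst h3) <;> (try subst h4) <;>
    intro i <;> simp only [List.count_cons, List.count_nil, beq_iff_eq] <;>
    rw [Nat.even_iff] <;> split_ifs <;> omega

lemma classify_iff (d e j k l m : ℕ) (hd : 0 < d) (he : 0 < e) :
    (∀ i : ℕ, Even (([j, j+d, k, k+d, l, l+e, m, m+e] : List ℕ).count i)) ↔
      Qpred d e j k l m :=
  ⟨classify_fwd d e j k l m hd he, classify_bwd d e j k l m hd he⟩

/-! ### Expectation of a sign monomial -/

lemma signs_coe (n : ℕ) (a : Fin n → Bool) (i : Fin n) :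
    signs n a ↑i = if a i then 1 else -1 := by
  simp [signs, i.isLt]

lemma prod_map_signs (n : ℕ) (f : ℕ → ℚ) (L : List ℕ) (hL : ∀ i ∈ L, i < n) :
    (L.map f).prod = ∏ i ∈ Finset.range n, f i ^ L.count i := by
  rw [Finset.prod_list_map_count]
  apply Finset.prod_subset
  · intro x hx
    simp only [List.mem_toFinset] at hx
    exact Finset.mem_range.mpr (hL x hx)
  · intro x _ hx
    simp only [List.mem_toFinset] at hx
    rw [List.count_eq_zero_of_not_mem hx, pow_zero]

lemma sum_bool_pow (c : ℕ) :
    ∑ b : Bool, (if b then (1:ℚ) else -1) ^ c = if Even c then 2 else 0 := by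
  rw [Fintype.sum_bool]
  norm_num
  by_cases h : Even c
  · rw [if_pos h, h.neg_one_pow]; norm_num
  · rw [if_neg h, (Nat.odd_iff.mpr (Nat.not_even_iff.mp h)).neg_one_pow]; norm_num

lemma sum_signs_prod (n : ℕ) (L : List ℕ) (hL : ∀ i ∈ L, i < n)
    (P : Prop) [Decidable P] (hP : P ↔ ∀ i : ℕ, Even (L.count i)) :
    ∑ a : Fin n → Bool, (L.map (signs n a)).prod = if P then (2^n : ℚ) else 0 := by
  have step1 : ∀ a : Fin n → Bool,
      (L.map (signs n a)).prod = ∏ i : Fin n, (if a i then (1:ℚ) else -1) ^ L.count ↑i := by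
    intro a
    rw [prod_map_signs n (signs n a) L hL,
      ← Fin.prod_univ_eq_prod_range fun i => signs n a i ^ L.count i]
    exact Finset.prod_congr rfl fun i _ => by rw [signs_coe]
  rw [Finset.sum_congr rfl fun a _ => step1 a]
  rw [← Fintype.piFinset_univ,
    ← Finset.prod_univ_sum (fun _ : Fin n => (Finset.univ : Finset Bool))
      (fun i b => (if b then (1:ℚ) else -1) ^ L.count ↑i)]
  rw [Finset.prod_congr rfl fun (i : Fin n) _ => sum_bool_pow (L.count ↑i)]
  by_cases h : P
  · rw [if_pos h]
    rw [Finset.prod_congr rfl fun (i : Fin n) _ => if_pos (hP.mp h ↑i)]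
    simp
  · rw [if_neg h]
    have h' : ¬ ∀ i : ℕ, Even (L.count i) := fun hc => h (hP.mpr hc)
    push_neg at h'
    obtain ⟨i, hi⟩ := h'
    have hin : i < n := by
      by_contra hc
      exact hi (by rw [List.count_eq_zero_of_not_mem fun hm => hc (hL i hm)]; exact Even.zero)
    exact Finset.prod_eq_zero (Finset.mem_univ (⟨i, hin⟩ : Fin n)) (if_neg hi)

/-! ### Reduction of the expectation to a count -/

lemma swap5 {α : Type*} [Fintype α] (A B C D : Finset ℕ) (F : α → ℕ → ℕ → ℕ → ℕ → ℚ) :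
    ∑ a : α, ∑ j ∈ A, ∑ k ∈ B, ∑ l ∈ C, ∑ m ∈ D, F a j k l m
      = ∑ j ∈ A, ∑ k ∈ B, ∑ l ∈ C, ∑ m ∈ D, ∑ a : α, F a j k l m := by
  rw [Finset.sum_comm]
  refine Finset.sum_congr rfl fun j _ => ?_
  rw [Finset.sum_comm]
  refine Finset.sum_congr rfl fun k _ => ?_
  rw [Finset.sum_comm]
  refine Finset.sum_congr rfl fun l _ => ?_
  rw [Finset.sum_comm]

lemma step_sum (n u v : ℕ) (hn : 1 < n) (hu1 : 1 ≤ u) (hu : u ≤ n-1)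
    (hv1 : 1 ≤ v) (hv : v ≤ n-1) :
    (1 / 2 ^ n : ℚ) * ∑ a : Fin n → Bool,
        (acorr n (signs n a) u) ^ 2 * (acorr n (signs n a) v) ^ 2
      = ∑ j ∈ range u, ∑ k ∈ range u, ∑ l ∈ range v, ∑ m ∈ range v,
          (if Qpred (n-u) (n-v) j k l m then (1:ℚ) else 0) := by
  have hd : 0 < n - u := by omega
  have he : 0 < n - v := by omega
  have expand : ∀ a : Fin n → Bool,
      (acorr n (signs n a) u) ^ 2 * (acorr n (signs n a) v) ^ 2
        = ∑ j ∈ range u, ∑ k ∈ range u, ∑ l ∈ range v, ∑ m ∈ range v,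
            (([j, j+(n-u), k, k+(n-u), l, l+(n-v), m, m+(n-v)] : List ℕ).map (signs n a)).prod := by
    intro a
    unfold acorr
    rw [pow_two, pow_two, Finset.sum_mul_sum, Finset.sum_mul_sum, Finset.sum_mul]
    refine Finset.sum_congr rfl fun j _ => ?_
    rw [Finset.sum_mul]
    refine Finset.sum_congr rfl fun k _ => ?_
    rw [Finset.mul_sum]
    refine Finset.sum_congr rfl fun l _ => ?_
    rw [Finset.mul_sum]
    refine Finset.sum_congr rfl fun m _ => ?_
    simp only [List.map_cons, List.map_nil, List.prod_cons, List.prod_nil]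
    ring
  rw [Finset.sum_congr rfl fun a _ => expand a]
  rw [swap5]
  rw [Finset.mul_sum]
  refine Finset.sum_congr rfl fun j hj => ?_
  rw [Finset.mul_sum]
  refine Finset.sum_congr rfl fun k hk => ?_
  rw [Finset.mul_sum]
  refine Finset.sum_congr rfl fun l hl => ?_
  rw [Finset.mul_sum]
  refine Finset.sum_congr rfl fun m hm => ?_
  rw [Finset.mem_range] at hj hk hl hm
  rw [sum_signs_prod n _ ?_ (Qpred (n-u) (n-v) j k l m)
      ((classify_iff (n-u) (n-v) j k l m hd he).symm)]
  · split_ifs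
    · rw [one_div, inv_mul_cancel₀ (pow_ne_zero n two_ne_zero)]
    · rw [mul_zero]
  · intro i hi
    simp only [List.mem_cons, List.not_mem_nil, or_false] at hi
    rcases hi with rfl|rfl|rfl|rfl|rfl|rfl|rfl|rfl <;> omega

/-! ### Counting the solutions -/

lemma sum_if_lt (A : ℕ) (f : ℕ → ℚ) :
    ∑ x ∈ range A, (if x < A then f x else 0) = ∑ x ∈ range A, f x :=
  Finset.sum_congr rfl fun x hx => if_pos (Finset.mem_range.mp hx)

lemma sum_ind_ne (A : ℕ) :
    ∑ x ∈ range A, ∑ y ∈ range A, (if ¬ x = y then (1:ℚ) else 0) = A * A - A := by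
  have pw : ∀ x y : ℕ, (if ¬ x = y then (1:ℚ) else 0) = 1 - (if x = y then 1 else 0) := by
    intro x y; split_ifs <;> norm_num
  simp only [pw, Finset.sum_sub_distrib, Finset.sum_const, Finset.card_range, nsmul_eq_mul,
    mul_one, Finset.sum_ite_eq, Finset.mem_range]
  rw [Finset.sum_congr rfl fun x hx => if_pos (Finset.mem_range.mp hx)]
  simp [mul_comm]

lemma count_lt (u c : ℕ) (hc : c ≤ u) :
    ∑ j ∈ range u, (if j < c then (1:ℚ) else 0) = c := by
  rw [← Finset.sum_subset (Finset.range_subset_range.mpr hc)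
    (fun x _ hx => if_neg (by simpa using hx))]
  rw [Finset.sum_congr rfl fun j hj => if_pos (Finset.mem_range.mp hj)]
  simp

lemma fold3 (p q r : Prop) [Decidable p] [Decidable q] [Decidable r] :
    (if p then if q then if r then (1:ℚ) else 0 else 0 else 0)
      = if p ∧ q ∧ r then 1 else 0 := by
  symm
  simp only [ite_and]

lemma pieceA (u : ℕ) : (∑ x ∈ Finset.range u,
    ∑ x_1 ∈ Finset.range u, ∑ x_2 ∈ Finset.range u,
      if x_2 < u then if x_1 = x then (1:ℚ) else 0 else 0) = (u:ℚ) * u := by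
  simp only [sum_if_lt, Finset.sum_const, Finset.card_range, nsmul_eq_mul, mul_ite, mul_one,
    mul_zero, Finset.sum_ite_eq', Finset.mem_range]

lemma pieceB (u : ℕ) : (∑ x ∈ Finset.range u,
    ∑ x_1 ∈ Finset.range u,
      if x_1 < u then if x < u then if ¬ x = x_1 then (1:ℚ) else 0 else 0 else 0)
    = (u:ℚ) * u - u := by
  simp only [sum_if_lt]
  rw [Finset.sum_congr rfl fun x hx =>
    Finset.sum_congr rfl fun x1 _ => if_pos (Finset.mem_range.mp hx)]
  exact sum_ind_ne u

lemma pieceC (u : ℕ) : (∑ x ∈ Finset.range u,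
    if x < u then (∑ x_1 ∈ Finset.range u,
      if x_1 < u then (if ¬ x = x_1 then (1:ℚ) else 0) else 0) else 0)
    = (u:ℚ) * u - u := by
  rw [sum_if_lt]
  simp only [sum_if_lt]
  exact sum_ind_ne u

lemma count_diag (u d : ℕ) :
    ∑ j ∈ range u, ∑ k ∈ range u, ∑ l ∈ range u, ∑ m ∈ range u,
      (if Qpred d d j k l m then (1:ℚ) else 0)
    = 3 * (u:ℚ)^2 - 2 * u := by
  have pw : ∀ j k l m : ℕ, (if Qpred d d j k l m then (1:ℚ) else 0)
      = (if m = l ∧ k = j then (1:ℚ) else 0)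
        + (if m = k ∧ l = j ∧ ¬ j = k then (1:ℚ) else 0)
        + (if m = j ∧ l = k ∧ ¬ j = k then (1:ℚ) else 0) := by
    intro j k l m
    simp only [Qpred, eq_self_iff_true, true_and, not_true, false_and, false_or, or_false]
    split_ifs <;> (try norm_num) <;> omega
  simp only [pw, Finset.sum_add_distrib]
  simp only [ite_and, Finset.sum_ite_irrel, Finset.sum_ite_eq', Finset.sum_ite_eq,
    Finset.mem_range, Finset.sum_const_zero, Finset.sum_const, Finset.card_range,
    nsmul_eq_mul, mul_zero, mul_one, mul_ite]
  rw [pieceA, pieceB, pieceC]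
  ring

lemma ind_or_disjoint (p q : Prop) [Decidable p] [Decidable q] (h : ¬(p ∧ q)) :
    (if p ∨ q then (1:ℚ) else 0) = (if p then 1 else 0) + (if q then 1 else 0) := by
  by_cases hp : p
  · by_cases hq : q
    · exact absurd ⟨hp, hq⟩ h
    · simp [hp, hq]
  · simp [hp]

lemma pw_off (d e : ℕ) (hd : 0 < d) (he : 0 < e) (hde : ¬ d = e) (j k l m : ℕ) :
    (if Qpred d e j k l m then (1:ℚ) else 0)
      = (if m = l ∧ k = j then (1:ℚ) else 0)
        + (if m = j + d ∧ l = j ∧ k = j + e then (1:ℚ) else 0)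
        + (if m = j ∧ l = j + d ∧ k = j + e then (1:ℚ) else 0)
        + (if m = k + d ∧ l = k ∧ j = k + e then (1:ℚ) else 0)
        + (if m = k ∧ l = k + d ∧ j = k + e then (1:ℚ) else 0) := by
  have hiff : Qpred d e j k l m ↔
      (m = l ∧ k = j) ∨ ((m = j + d ∧ l = j ∧ k = j + e) ∨ ((m = j ∧ l = j + d ∧ k = j + e) ∨
        ((m = k + d ∧ l = k ∧ j = k + e) ∨ (m = k ∧ l = k + d ∧ j = k + e)))) := by
    constructor
    · intro h
      rcases h with ⟨h1, h2⟩ | ⟨h1, _⟩ |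
        ⟨_, (⟨h2, ⟨h3, h4⟩ | ⟨h3, h4⟩⟩ | ⟨h2, ⟨h3, h4⟩ | ⟨h3, h4⟩⟩)⟩
      · exact Or.inl ⟨h2.symm, h1.symm⟩
      · exact absurd h1 hde
      · exact Or.inr (Or.inl ⟨h4, h3, h2⟩)
      · exact Or.inr (Or.inr (Or.inl ⟨h4, h3, h2⟩))
      · exact Or.inr (Or.inr (Or.inr (Or.inl ⟨h4, h3, h2⟩)))
      · exact Or.inr (Or.inr (Or.inr (Or.inr ⟨h4, h3, h2⟩)))
    · intro h
      rcases h with ⟨h1, h2⟩ | ⟨h1, h2, h3⟩ | ⟨h1, h2, h3⟩ | ⟨h1, h2, h3⟩ | ⟨h1, h2, h3⟩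
      · exact Or.inl ⟨h2.symm, h1.symm⟩
      · exact Or.inr (Or.inr ⟨hde, Or.inl ⟨h3, Or.inl ⟨h2, h1⟩⟩⟩)
      · exact Or.inr (Or.inr ⟨hde, Or.inl ⟨h3, Or.inr ⟨h2, h1⟩⟩⟩)
      · exact Or.inr (Or.inr ⟨hde, Or.inr ⟨h3, Or.inl ⟨h2, h1⟩⟩⟩)
      · exact Or.inr (Or.inr ⟨hde, Or.inr ⟨h3, Or.inr ⟨h2, h1⟩⟩⟩)
  rw [if_congr hiff rfl rfl]
  rw [ind_or_disjoint _ _ (by omega), ind_or_disjoint _ _ (by omega),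
    ind_or_disjoint _ _ (by omega), ind_or_disjoint _ _ (by omega)]
  ring

lemma count_off (n u v : ℕ) (hn : 1 < n) (hu1 : 1 ≤ u) (hu : u ≤ n-1)
    (hv1 : 1 ≤ v) (hv : v ≤ n-1) (huv : ¬ u = v) :
    ∑ j ∈ range u, ∑ k ∈ range u, ∑ l ∈ range v, ∑ m ∈ range v,
      (if Qpred (n-u) (n-v) j k l m then (1:ℚ) else 0)
    = (u:ℚ) * v + 4 * ((u + v - n : ℕ) : ℚ) := by
  have hde : ¬ (n-u) = (n-v) := by omega
  have hd : 0 < n - u := by omega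
  have he : 0 < n - v := by omega
  simp only [pw_off (n-u) (n-v) hd he hde, Finset.sum_add_distrib]
  simp only [ite_and, Finset.sum_ite_irrel, Finset.sum_ite_eq', Finset.sum_ite_eq,
    Finset.mem_range, Finset.sum_const_zero, Finset.sum_const, Finset.card_range,
    nsmul_eq_mul, mul_zero, mul_one, mul_ite]
  have hA : (∑ x ∈ Finset.range u, ∑ x_1 ∈ Finset.range u, ∑ x_2 ∈ Finset.range v,
      if x_2 < v then if x_1 = x then (1:ℚ) else 0 else 0) = (u:ℚ) * v := by
    simp only [sum_if_lt, Finset.sum_const, Finset.card_range, nsmul_eq_mul, mul_ite, mul_one,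
      mul_zero, Finset.sum_ite_eq', Finset.mem_range]
  have h1 : (∑ x ∈ Finset.range u,
      if x + (n-u) < v then if x < v then if x + (n-v) < u then (1:ℚ) else 0 else 0 else 0)
      = ((u + v - n : ℕ) : ℚ) := by
    simp only [fold3]
    rw [Finset.sum_congr rfl fun x _ =>
      if_congr (show (x + (n-u) < v ∧ x < v ∧ x + (n-v) < u) ↔ x < u + v - n by omega) rfl rfl]
    exact count_lt u (u + v - n) (by omega)
  have h2 : (∑ x ∈ Finset.range u,
      if x < v then if x + (n-u) < v then if x + (n-v) < u then (1:ℚ) else 0 else 0 else 0)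
      = ((u + v - n : ℕ) : ℚ) := by
    simp only [fold3]
    rw [Finset.sum_congr rfl fun x _ =>
      if_congr (show (x < v ∧ x + (n-u) < v ∧ x + (n-v) < u) ↔ x < u + v - n by omega) rfl rfl]
    exact count_lt u (u + v - n) (by omega)
  have h3 : (∑ x ∈ Finset.range u, ∑ x_1 ∈ Finset.range u,
      if x_1 + (n-u) < v then if x_1 < v then if x = x_1 + (n-v) then (1:ℚ) else 0 else 0 else 0)
      = ((u + v - n : ℕ) : ℚ) := by
    rw [Finset.sum_comm]
    simp only [Finset.sum_ite_irrel, Finset.sum_ite_eq', Finset.mem_range, Finset.sum_const_zero]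
    simp only [fold3]
    rw [Finset.sum_congr rfl fun x _ =>
      if_congr (show (x + (n-u) < v ∧ x < v ∧ x + (n-v) < u) ↔ x < u + v - n by omega) rfl rfl]
    exact count_lt u (u + v - n) (by omega)
  have h4 : (∑ x ∈ Finset.range u, ∑ x_1 ∈ Finset.range u,
      if x_1 < v then if x_1 + (n-u) < v then if x = x_1 + (n-v) then (1:ℚ) else 0 else 0 else 0)
      = ((u + v - n : ℕ) : ℚ) := by
    rw [Finset.sum_comm]
    simp only [Finset.sum_ite_irrel, Finset.sum_ite_eq', Finset.mem_range, Finset.sum_const_zero]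
    simp only [fold3]
    rw [Finset.sum_congr rfl fun x _ =>
      if_congr (show (x < v ∧ x + (n-u) < v ∧ x + (n-v) < u) ↔ x < u + v - n by omega) rfl rfl]
    exact count_lt u (u + v - n) (by omega)
  rw [hA, h1, h2, h3, h4]
  ring

/-! ### Elementary sums -/

lemma sum_id (n : ℕ) : ∑ x ∈ range n, (x:ℚ) = n * (n-1) / 2 := by
  induction n with
  | zero => simp
  | succ n ih => rw [Finset.sum_range_succ, ih]; push_cast; ring

lemma sum_sq (n : ℕ) : ∑ x ∈ range n, (x:ℚ)^2 = n * (n-1) * (2*n-1) / 6 := by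
  induction n with
  | zero => simp
  | succ n ih => rw [Finset.sum_range_succ, ih]; push_cast; ring

lemma sum_rev (n : ℕ) : ∑ w ∈ range n, ((n - w : ℕ):ℚ) = n * (n+1) / 2 := by
  rw [← Finset.sum_range_reflect]
  rw [Finset.sum_congr rfl fun w hw => by
    have hwn := Finset.mem_range.mp hw
    rw [show n - (n - 1 - w) = w + 1 by omega]]
  push_cast
  rw [Finset.sum_add_distrib, sum_id]
  simp
  ring

lemma sum_tail : ∀ n u : ℕ, u ≤ n →
    ∑ w ∈ range n, ((u - (w+1) : ℕ):ℚ) = u * (u-1) / 2 := by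
  intro n
  induction n with
  | zero => intro u hu; interval_cases u; simp
  | succ n ih =>
    intro u hu
    rw [Finset.sum_range_succ]
    rcases Nat.lt_or_ge u (n+1) with h | h
    · rw [ih u (by omega), show u - (n+1) = 0 by omega]
      simp
    · have hun : u = n + 1 := by omega
      subst hun
      rw [show n + 1 - (n+1) = 0 by omega]
      rw [Finset.sum_congr rfl fun w hw => by
        rw [show n + 1 - (w+1) = n - w by omega]]
      rw [sum_rev]
      push_cast
      ring

lemma g_eval (n : ℕ) :
    ∑ u ∈ range n, ∑ v ∈ range n, ((u + v - n : ℕ):ℚ) = n * (n-1) * (n-2) / 6 := by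
  have inner : ∀ u ∈ range n, ∑ v ∈ range n, ((u + v - n : ℕ):ℚ) = ((u:ℚ)^2 - u)/2 := by
    intro u hu
    have hun := Finset.mem_range.mp hu
    rw [← Finset.sum_range_reflect]
    rw [Finset.sum_congr rfl fun v hv => by
      have hvn := Finset.mem_range.mp hv
      rw [show u + (n - 1 - v) - n = u - (v+1) by omega]]
    rw [sum_tail n u (by omega)]
    ring
  rw [Finset.sum_congr rfl inner]
  rw [← Finset.sum_div, Finset.sum_sub_distrib, sum_sq, sum_id]
  ring

lemma h_eval : ∀ n : ℕ, ∑ u ∈ range n, ((2*u - n : ℕ):ℚ)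
    = ((n:ℚ)^2 - 2*n + ((n % 2 : ℕ):ℚ))/4 := by
  have key : ∀ n : ℕ,
      (∑ u ∈ range n, ((2*u - n : ℕ):ℚ) = ((n:ℚ)^2 - 2*n + ((n % 2 : ℕ):ℚ))/4) ∧
      (∑ u ∈ range (n+1), ((2*u - (n+1) : ℕ):ℚ)
        = (((n:ℚ)+1)^2 - 2*((n:ℚ)+1) + (((n+1) % 2 : ℕ):ℚ))/4) := by
    intro n
    induction n with
    | zero => norm_num
    | succ n ih =>
      refine ⟨by push_cast [ih.2]; ring, ?_⟩
      rw [Finset.sum_range_succ']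
      rw [Finset.sum_congr rfl fun i _ => by
        rw [show 2*(i+1) - (n+1+1) = 2*i - n by omega]]
      rw [Finset.sum_range_succ, show 2*0 - (n+1+1) = 0 by omega, show 2*n - n = n by omega]
      rw [ih.1, show (n+1+1) % 2 = n % 2 by omega]
      push_cast
      ring
  exact fun n => (key n).1

lemma parity_eval (n : ℕ) : ((n % 2 : ℕ):ℚ) = (1 - (-1:ℚ)^n)/2 := by
  rcases Nat.even_or_odd n with h | h
  · rw [Nat.even_iff.mp h, h.neg_one_pow]
    norm_num
  · rw [Nat.odd_iff.mp h, h.neg_one_pow]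
    norm_num

lemma final_sum (n : ℕ) :
    ∑ u ∈ range n, ∑ v ∈ range n,
      (if u = v then 3*(u:ℚ)^2 - 2*(u:ℚ) else (u:ℚ)*(v:ℚ) + 4*((u + v - n : ℕ):ℚ))
    = (n:ℚ)^2*((n:ℚ)-1)^2/4 + (4/3)*(n:ℚ)^3 - 5*(n:ℚ)^2 + (14/3)*(n:ℚ)
        - (1-(-1:ℚ)^n)/2 := by
  have pw : ∀ u v : ℕ,
      (if u = v then 3*(u:ℚ)^2 - 2*(u:ℚ) else (u:ℚ)*(v:ℚ) + 4*((u + v - n : ℕ):ℚ))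
      = (u:ℚ)*(v:ℚ) + 4*((u + v - n : ℕ):ℚ)
        + (if u = v then 3*(u:ℚ)^2 - 2*(u:ℚ) - ((u:ℚ)*(u:ℚ) + 4*((2*u - n : ℕ):ℚ)) else 0) := by
    intro u v
    by_cases h : u = v
    · subst h
      rw [if_pos rfl, if_pos rfl, show u + u - n = 2*u - n by omega]
      ring
    · rw [if_neg h, if_neg h, add_zero]
  simp only [pw, Finset.sum_add_distrib]
  rw [← Finset.sum_mul_sum]
  rw [show (∑ u ∈ range n, ∑ v ∈ range n, 4*((u + v - n : ℕ):ℚ))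
      = 4 * ∑ u ∈ range n, ∑ v ∈ range n, ((u + v - n : ℕ):ℚ) by
    rw [Finset.mul_sum]
    exact Finset.sum_congr rfl fun u _ => by rw [Finset.mul_sum]]
  rw [Finset.sum_congr rfl fun u hu => Finset.sum_ite_eq (range n) u
    (fun _ => 3*(u:ℚ)^2 - 2*(u:ℚ) - ((u:ℚ)*(u:ℚ) + 4*((2*u - n : ℕ):ℚ)))]
  rw [Finset.sum_congr rfl fun u hu => if_pos hu]
  simp only [Finset.sum_sub_distrib, Finset.sum_add_distrib]
  rw [show (∑ u ∈ range n, 3*(u:ℚ)^2) = 3 * ∑ u ∈ range n, (u:ℚ)^2 from by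
      rw [Finset.mul_sum],
    show (∑ u ∈ range n, 2*(u:ℚ)) = 2 * ∑ u ∈ range n, (u:ℚ) from by rw [Finset.mul_sum],
    show (∑ u ∈ range n, (u:ℚ)*(u:ℚ)) = ∑ u ∈ range n, (u:ℚ)^2 from
      Finset.sum_congr rfl fun u _ => by ring,
    show (∑ u ∈ range n, 4*((2*u - n : ℕ):ℚ)) = 4 * ∑ u ∈ range n, ((2*u - n : ℕ):ℚ) from by
      rw [Finset.mul_sum]]
  rw [sum_id, sum_sq, g_eval, h_eval, parity_eval]
  ring

/-! ### Main theorem -/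

lemma exp_term (n u v : ℕ) (hn : 1 < n)
    (hu : u ∈ Finset.Icc 1 (n-1)) (hv : v ∈ Finset.Icc 1 (n-1)) :
    (1 / 2 ^ n : ℚ) * ∑ a : Fin n → Bool,
        (acorr n (signs n a) u) ^ 2 * (acorr n (signs n a) v) ^ 2
      = if u = v then 3*(u:ℚ)^2 - 2*(u:ℚ) else (u:ℚ)*(v:ℚ) + 4*((u + v - n : ℕ):ℚ) := by
  rw [Finset.mem_Icc] at hu hv
  rw [step_sum n u v hn hu.1 hu.2 hv.1 hv.2]
  by_cases h : u = v
  · subst h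
    rw [if_pos rfl]
    exact count_diag u (n-u)
  · rw [if_neg h]
    exact count_off n u v hn hu.1 hu.2 hv.1 hv.2 h

/-- For i.i.d. uniform ±1 coefficients,
`∑_{u,v=1}^{n-1} E(C_u² C_v²) = n²(n-1)²/4 + (4/3)n³ - 5n² + (14/3)n - (1-(-1)ⁿ)/2`. -/
theorem stmt_14 (n : ℕ) (hn : 1 < n) :
    ∑ u ∈ Finset.Icc 1 (n - 1), ∑ v ∈ Finset.Icc 1 (n - 1),
        (1 / 2 ^ n : ℚ) * ∑ a : Fin n → Bool,
          (acorr n (signs n a) u) ^ 2 * (acorr n (signs n a) v) ^ 2 =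
      (n : ℚ) ^ 2 * (n - 1) ^ 2 / 4 + (4 / 3) * n ^ 3 - 5 * n ^ 2 + (14 / 3) * n
        - (1 - (-1 : ℚ) ^ n) / 2 := by
  rw [Finset.sum_congr rfl fun u hu => Finset.sum_congr rfl fun v hv =>
    exp_term n u v hn hu hv]
  have hsub : Finset.Icc 1 (n-1) ⊆ range n := by
    intro x hx
    rw [Finset.mem_Icc] at hx
    rw [Finset.mem_range]
    omega
  have F0 : ∀ u v : ℕ, u < n → v < n → (u = 0 ∨ v = 0) →
      (if u = v then 3*(u:ℚ)^2 - 2*(u:ℚ) else (u:ℚ)*(v:ℚ) + 4*((u + v - n : ℕ):ℚ)) = 0 := by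
    intro u v hun hvn h0
    by_cases h : u = v
    · rw [if_pos h]
      have : u = 0 := by omega
      subst this
      norm_num
    · rw [if_neg h, show u + v - n = 0 by omega]
      rcases h0 with rfl | rfl <;> norm_num
  have hinner : ∀ u ∈ range n,
      (∑ v ∈ Finset.Icc 1 (n-1), (if u = v then 3*(u:ℚ)^2 - 2*(u:ℚ)
          else (u:ℚ)*(v:ℚ) + 4*((u + v - n : ℕ):ℚ)))
        = ∑ v ∈ range n, (if u = v then 3*(u:ℚ)^2 - 2*(u:ℚ)
          else (u:ℚ)*(v:ℚ) + 4*((u + v - n : ℕ):ℚ)) := by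
    intro u hu
    refine Finset.sum_subset hsub fun x hx hnx => ?_
    have hx0 : x = 0 := by
      rw [Finset.mem_range] at hx
      rw [Finset.mem_Icc] at hnx
      omega
    exact F0 u x (Finset.mem_range.mp hu) (by rw [Finset.mem_range] at hx; omega) (Or.inr hx0)
  rw [show (∑ u ∈ Finset.Icc 1 (n-1), ∑ v ∈ Finset.Icc 1 (n-1),
      (if u = v then 3*(u:ℚ)^2 - 2*(u:ℚ) else (u:ℚ)*(v:ℚ) + 4*((u + v - n : ℕ):ℚ)))
      = ∑ u ∈ range n, ∑ v ∈ range n,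
      (if u = v then 3*(u:ℚ)^2 - 2*(u:ℚ) else (u:ℚ)*(v:ℚ) + 4*((u + v - n : ℕ):ℚ)) from ?_]
  · exact final_sum n
  · rw [← Finset.sum_subset hsub fun x hx hnx => ?_]
    · exact Finset.sum_congr rfl fun u hu => hinner u (hsub hu)
    · have hx0 : x = 0 := by
        rw [Finset.mem_range] at hx
        rw [Finset.mem_Icc] at hnx
        omega
      subst hx0
      rw [Finset.sum_eq_zero]
      intro v hv
      exact F0 0 v (by omega) (Finset.mem_range.mp hv) (Or.inl rfl)
end

section
/- Let n be odd and let f be drawn uniformly at random from the skew-symmetric Littlewood polynomials of length n. Then E(‖f‖₄⁴) = 2n² - 3n + 2. -/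
open MeasureTheory

/-- The fourth power of the `L₄` norm of `f(z) = ∑_{j<n} a_j z^j` on the unit circle. -/
noncomputable def L4pow4 (n : ℕ) (a : ℕ → ℝ) : ℝ :=
  (1 / (2 * Real.pi)) * ∫ θ in (0:ℝ)..(2 * Real.pi),
    ‖∑ j ∈ Finset.range n, (a j : ℂ) * Complex.exp ((θ : ℂ) * Complex.I) ^ j‖ ^ 4

/-- The coefficient sequence of the skew-symmetric Littlewood polynomial of odd
length `n` determined by the free coefficients `a_0, …, a_{(n-1)/2}` (given as
Booleans encoding ±1): the remaining coefficients are determined by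
`a_j = (-1)^{j+(n-1)/2} a_{n-1-j}`. -/
def skewCoef (n : ℕ) (f : Fin ((n + 1) / 2) → Bool) : ℕ → ℝ := fun j =>
  if h : j < (n + 1) / 2 then (if f ⟨j, h⟩ then 1 else -1)
  else if h2 : j < n then
    (-1 : ℝ) ^ (j + (n - 1) / 2) * (if f ⟨n - 1 - j, by omega⟩ then 1 else -1)
  else 0

/-!
Expanding `|f|⁴ = |f²|²` and integrating over the circle gives
`‖f‖₄⁴ = ∑_{p₁+p₂=q₁+q₂} a_{p₁} a_{p₂} a_{q₁} a_{q₂}`. Each `a_j` is a fixed sign times the free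
coefficient of index `min j (n-1-j)`, so a quadruple has nonzero mean only if these free indices
pair off. On the antidiagonal `p₁ + p₂ = n - 1` they always do, and there
`a_{p₁} a_{p₂} a_{q₁} a_{q₂} = (-1)^(p₁+q₁)` identically; off it they pair off exactly when
`(q₁, q₂)` is `(p₁, p₂)` or `(p₂, p₁)`, and the product is then `1`. The antidiagonal thus
contributes `(∑_{j<n} (-1)^j)² = 1`, and each remaining ordered pair `p` contributes `2`, or `1`
when `p₁ = p₂`: in total `(2n² - n) - (2n - 1)`.
-/

open Finset Complex

lemma integral_cos_nat_sub_mul (s t : ℕ) :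
    ∫ θ in (0 : ℝ)..2 * Real.pi, Real.cos (((s : ℝ) - t) * θ) =
      if s = t then 2 * Real.pi else 0 := by
  split_ifs with h
  · simp [h]
  · have hst : (s : ℝ) - t ≠ 0 := sub_ne_zero.mpr (by exact_mod_cast h)
    have h2π : ((s : ℝ) - t) * (2 * Real.pi) = ((2 * ((s : ℤ) - t) : ℤ) : ℝ) * Real.pi := by
      push_cast; ring
    rw [intervalIntegral.integral_comp_mul_left Real.cos hst, integral_cos, h2π,
      Real.sin_int_mul_pi, mul_zero, Real.sin_zero, sub_zero, smul_zero]

lemma exp_pow_mul_conj_exp_pow (θ : ℝ) (k l : ℕ) :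
    exp (θ * I) ^ k * (starRingEnd ℂ) (exp (θ * I) ^ l) = exp (↑(((k : ℝ) - l) * θ) * I) := by
  rw [map_pow, ← exp_conj, ← exp_nat_mul, ← exp_nat_mul, ← exp_add]
  congr 1
  simp only [map_mul, conj_ofReal, conj_I]
  push_cast
  ring

lemma norm_sq_sum_mul_exp {ι : Type*} (s : Finset ι) (c : ι → ℝ) (k : ι → ℕ) (θ : ℝ) :
    ‖∑ i ∈ s, (c i : ℂ) * exp (θ * I) ^ k i‖ ^ 2 =
      ∑ i ∈ s, ∑ j ∈ s, c i * c j * Real.cos (((k i : ℝ) - k j) * θ) := by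
  rw [← normSq_eq_norm_sq, ← ofReal_re (normSq _), ← mul_conj, map_sum, Finset.sum_mul_sum, re_sum]
  refine Finset.sum_congr rfl fun i _ => ?_
  rw [re_sum]
  refine Finset.sum_congr rfl fun j _ => ?_
  rw [map_mul, conj_ofReal, mul_mul_mul_comm, exp_pow_mul_conj_exp_pow, ← ofReal_mul,
    re_ofReal_mul, exp_ofReal_mul_I_re]

theorem integral_norm_sq_sum_mul_exp {ι : Type*} (s : Finset ι) (c : ι → ℝ) (k : ι → ℕ) :
    1 / (2 * Real.pi) *
        ∫ θ in (0 : ℝ)..2 * Real.pi, ‖∑ i ∈ s, (c i : ℂ) * exp (θ * I) ^ k i‖ ^ 2 =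
      ∑ i ∈ s, ∑ j ∈ s, if k i = k j then c i * c j else 0 := by
  simp_rw [norm_sq_sum_mul_exp]
  rw [intervalIntegral.integral_finsetSum fun i _ => ?_]
  · rw [Finset.mul_sum]
    refine Finset.sum_congr rfl fun i _ => ?_
    rw [intervalIntegral.integral_finsetSum fun j _ => ?_, Finset.mul_sum]
    · refine Finset.sum_congr rfl fun j _ => ?_
      rw [intervalIntegral.integral_const_mul, integral_cos_nat_sub_mul]
      split_ifs
      · field_simp
      · simp
    · exact (by fun_prop : Continuous _).intervalIntegrable _ _
  · exact (by fun_prop : Continuous _).intervalIntegrable _ _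

lemma sq_sum_range_mul_pow {R : Type*} [CommSemiring R] (n : ℕ) (a : ℕ → R) (z : R) :
    (∑ j ∈ range n, a j * z ^ j) ^ 2 =
      ∑ p ∈ range n ×ˢ range n, a p.1 * a p.2 * z ^ (p.1 + p.2) := by
  rw [sq, Finset.sum_mul_sum, Finset.sum_product]
  simp only [pow_add]
  exact Finset.sum_congr rfl fun i _ => Finset.sum_congr rfl fun j _ => by ring

theorem L4pow4_eq_sum (n : ℕ) (a : ℕ → ℝ) :
    L4pow4 n a = ∑ p ∈ range n ×ˢ range n, ∑ q ∈ range n ×ˢ range n,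
      if p.1 + p.2 = q.1 + q.2 then a p.1 * a p.2 * (a q.1 * a q.2) else 0 := by
  have hsq (θ : ℝ) : ‖∑ j ∈ range n, (a j : ℂ) * exp (θ * I) ^ j‖ ^ 4 =
      ‖∑ p ∈ range n ×ˢ range n, ((a p.1 * a p.2 : ℝ) : ℂ) * exp (θ * I) ^ (p.1 + p.2)‖ ^ 2 := by
    rw [show 4 = 2 * 2 from rfl, pow_mul, ← norm_pow, sq_sum_range_mul_pow]
    push_cast
    rfl
  simp only [L4pow4, hsq, integral_norm_sq_sum_mul_exp]

def boolSign (b : Bool) : ℝ := if b then 1 else -1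

lemma boolSign_mul_self (b : Bool) : boolSign b * boolSign b = 1 := by
  cases b <;> norm_num [boolSign]

lemma boolSign_not (b : Bool) : boolSign (!b) = -boolSign b := by
  cases b <;> norm_num [boolSign]

section RandomSigns

variable {ι : Type*} [DecidableEq ι]

lemma boolSign_update_not (f : ι → Bool) (i j : ι) :
    boolSign (Function.update f i (!f i) j) =
      if j = i then -boolSign (f j) else boolSign (f j) := by
  by_cases h : j = i
  · subst h; simp [boolSign_not]
  · simp [h]

lemma sum_eq_zero_of_update_not [Fintype ι] (i : ι) (g : (ι → Bool) → ℝ)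
    (hg : ∀ f, g (Function.update f i (!f i)) = -g f) : ∑ f, g f = 0 := by
  have hinv : Function.Involutive fun f : ι → Bool => Function.update f i (!f i) := by
    intro f
    simp
  have h := Fintype.sum_equiv hinv.toPerm (fun f => -g f) g fun f => (hg f).symm
  rw [Finset.sum_neg_distrib] at h
  linarith

lemma sum_boolSign_mul_four_eq_zero [Fintype ι] {w x y z : ι}
    (h : ¬((w = x ∧ y = z) ∨ (w = y ∧ x = z) ∨ (w = z ∧ x = y))) :
    ∑ f : ι → Bool, boolSign (f w) * boolSign (f x) * boolSign (f y) * boolSign (f z) = 0 := by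
  have hlone : (x ≠ w ∧ y ≠ w ∧ z ≠ w) ∨ (w ≠ x ∧ y ≠ x ∧ z ≠ x) ∨
      (w ≠ y ∧ x ≠ y ∧ z ≠ y) ∨ (w ≠ z ∧ x ≠ z ∧ y ≠ z) := by
    grind
  rcases hlone with ⟨h₁, h₂, h₃⟩ | ⟨h₁, h₂, h₃⟩ | ⟨h₁, h₂, h₃⟩ | ⟨h₁, h₂, h₃⟩ <;>
    [apply sum_eq_zero_of_update_not w; apply sum_eq_zero_of_update_not x;
      apply sum_eq_zero_of_update_not y; apply sum_eq_zero_of_update_not z] <;>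
    intro f <;> simp only [boolSign_update_not, h₁, h₂, h₃, if_true, if_false] <;> ring

lemma sum_mul_boolSign_four_eq_zero [Fintype ι] {w x y z : ι} (a b c d : ℝ)
    (h : ¬((w = x ∧ y = z) ∨ (w = y ∧ x = z) ∨ (w = z ∧ x = y))) :
    ∑ f : ι → Bool, a * boolSign (f w) * (b * boolSign (f x)) *
      (c * boolSign (f y) * (d * boolSign (f z))) = 0 := by
  rw [← mul_zero (a * b * c * d), ← sum_boolSign_mul_four_eq_zero h, Finset.mul_sum]
  exact Finset.sum_congr rfl fun f _ => by ring

end RandomSigns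

lemma neg_one_pow_congr_mod_two {R : Type*} [Ring R] {a b : ℕ}
    (h : a % 2 = b % 2) : (-1 : R) ^ a = (-1) ^ b := by
  rw [neg_one_pow_eq_pow_mod_two, h, ← neg_one_pow_eq_pow_mod_two]

lemma sum_range_prod_ite_antidiagonal (n : ℕ) (g : ℕ × ℕ → ℝ) :
    ∑ p ∈ range n ×ˢ range n, (if p.1 + p.2 = n - 1 then g p else 0) =
      ∑ j ∈ range n, g (j, n - 1 - j) := by
  rw [Finset.sum_product]
  refine Finset.sum_congr rfl fun i hi => ?_
  rw [mem_range] at hi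
  rw [Finset.sum_eq_single_of_mem (n - 1 - i) (mem_range.mpr (by omega)), if_pos (by omega)]
  intro j _ hj
  rw [if_neg (by omega)]

lemma sum_range_neg_one_pow_of_odd {n : ℕ} (hn : Odd n) : ∑ j ∈ range n, (-1 : ℝ) ^ j = 1 := by
  rw [neg_one_geom_sum, if_neg (Nat.not_even_iff_odd.mpr hn)]

def freeIndex (n j : ℕ) : ℕ := min j (n - 1 - j)

def skewSign (n j : ℕ) : ℝ := if j < (n + 1) / 2 then 1 else (-1) ^ (j + (n - 1) / 2)

section SkewCoefficients

variable {n : ℕ}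

lemma freeIndex_lt {j : ℕ} (hj : j < n) : freeIndex n j < (n + 1) / 2 := by
  unfold freeIndex; omega

lemma skewCoef_eq_skewSign_mul (f : Fin ((n + 1) / 2) → Bool) {j : ℕ} (hj : j < n) :
    skewCoef n f j = skewSign n j * boolSign (f ⟨freeIndex n j, freeIndex_lt hj⟩) := by
  by_cases h : j < (n + 1) / 2
  · have hfree : freeIndex n j = j := by unfold freeIndex; omega
    simp [skewCoef, skewSign, boolSign, h, hfree]
  · have hfree : freeIndex n j = n - 1 - j := by unfold freeIndex; omega
    simp [skewCoef, skewSign, boolSign, h, hj, hfree]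

lemma skewSign_mul_self (j : ℕ) : skewSign n j * skewSign n j = 1 := by
  unfold skewSign
  split_ifs
  · norm_num
  · rw [← pow_add, ← two_mul, pow_mul]; norm_num

lemma skewSign_mul_skewSign_reflect (hn : Odd n) {j : ℕ} (hj : j < n) :
    skewSign n j * skewSign n (n - 1 - j) = (-1) ^ (j + (n - 1) / 2) := by
  obtain ⟨m, rfl⟩ := hn
  unfold skewSign
  split_ifs <;> simp only [one_mul, mul_one, ← pow_add]
  · rw [neg_one_pow_congr_mod_two (b := 0) (by omega), pow_zero]
  all_goals exact neg_one_pow_congr_mod_two (by omega)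

lemma skewCoef_mul_self (f : Fin ((n + 1) / 2) → Bool) {j : ℕ} (hj : j < n) :
    skewCoef n f j * skewCoef n f j = 1 := by
  rw [skewCoef_eq_skewSign_mul f hj, mul_mul_mul_comm, skewSign_mul_self, boolSign_mul_self,
    one_mul]

lemma skewCoef_mul_skewCoef_reflect (hn : Odd n) (f : Fin ((n + 1) / 2) → Bool) {j : ℕ}
    (hj : j < n) : skewCoef n f j * skewCoef n f (n - 1 - j) = (-1) ^ (j + (n - 1) / 2) := by
  have hfree : freeIndex n (n - 1 - j) = freeIndex n j := by unfold freeIndex; omega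
  rw [skewCoef_eq_skewSign_mul f hj, skewCoef_eq_skewSign_mul f (by omega : n - 1 - j < n),
    mul_mul_mul_comm, skewSign_mul_skewSign_reflect hn hj]
  simp only [hfree, boolSign_mul_self, mul_one]

def skewMoment (n : ℕ) (p q : ℕ × ℕ) : ℝ :=
  if p.1 + p.2 = n - 1 then (if q.1 + q.2 = n - 1 then (-1) ^ (p.1 + q.1) else 0)
  else if q = p ∨ q = p.swap then 1 else 0

lemma sum_const_fun_bool (N : ℕ) (c : ℝ) : ∑ _f : Fin N → Bool, c = 2 ^ N * c := by
  simp

theorem sum_skewCoef_mul_four (hn : Odd n) {p q : ℕ × ℕ} (hp : p ∈ range n ×ˢ range n)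
    (hq : q ∈ range n ×ˢ range n) :
    ∑ f : Fin ((n + 1) / 2) → Bool,
        (if p.1 + p.2 = q.1 + q.2 then
          skewCoef n f p.1 * skewCoef n f p.2 * (skewCoef n f q.1 * skewCoef n f q.2) else 0) =
      2 ^ ((n + 1) / 2) * skewMoment n p q := by
  obtain ⟨p₁, p₂⟩ := p
  obtain ⟨q₁, q₂⟩ := q
  simp only [mem_product, mem_range] at hp hq
  simp only [skewMoment, Prod.mk.injEq, Prod.swap_prod_mk]
  by_cases hpq : p₁ + p₂ = q₁ + q₂
  swap
  · simp only [if_neg hpq, sum_const_zero]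
    split_ifs <;> first | omega | simp
  simp only [if_pos hpq]
  by_cases hanti : p₁ + p₂ = n - 1
  · obtain rfl : p₂ = n - 1 - p₁ := by omega
    obtain rfl : q₂ = n - 1 - q₁ := by omega
    simp only [skewCoef_mul_skewCoef_reflect hn _ hp.1, skewCoef_mul_skewCoef_reflect hn _ hq.1,
      sum_const_fun_bool, if_pos hanti, if_pos (hpq ▸ hanti), ← pow_add]
    rw [neg_one_pow_congr_mod_two (b := p₁ + q₁) (by omega)]
  rw [if_neg hanti]
  by_cases hpair : q₁ = p₁ ∧ q₂ = p₂ ∨ q₁ = p₂ ∧ q₂ = p₁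
  · rw [if_pos hpair, ← sum_const_fun_bool]
    refine Finset.sum_congr rfl fun f _ => ?_
    rcases hpair with ⟨rfl, rfl⟩ | ⟨rfl, rfl⟩
    · rw [mul_mul_mul_comm, skewCoef_mul_self f hp.1, skewCoef_mul_self f hp.2, one_mul]
    · rw [mul_comm (skewCoef n f q₂), mul_mul_mul_comm, skewCoef_mul_self f hp.1,
        skewCoef_mul_self f hp.2, one_mul]
  rw [if_neg hpair, mul_zero]
  simp only [skewCoef_eq_skewSign_mul _ hp.1, skewCoef_eq_skewSign_mul _ hp.2,
    skewCoef_eq_skewSign_mul _ hq.1, skewCoef_eq_skewSign_mul _ hq.2]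
  refine sum_mul_boolSign_four_eq_zero _ _ _ _ ?_
  simp only [Fin.mk.injEq, freeIndex]
  omega

lemma sum_skewMoment_right (hn : Odd n) {p : ℕ × ℕ} (hp : p ∈ range n ×ˢ range n) :
    ∑ q ∈ range n ×ˢ range n, skewMoment n p q =
      if p.1 + p.2 = n - 1 then (-1) ^ p.1 else if p.1 = p.2 then 1 else 2 := by
  unfold skewMoment
  split_ifs with hanti hdiag
  · simp only [sum_range_prod_ite_antidiagonal, pow_add, ← Finset.mul_sum,
      sum_range_neg_one_pow_of_odd hn, mul_one]
  · have hswap : p.swap = p := Prod.ext hdiag.symm hdiag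
    simp [hswap, hp]
  · have hswap : p.swap ≠ p := fun h => hdiag (congrArg Prod.snd h)
    rw [Finset.sum_boole, Finset.filter_or, Finset.filter_eq', Finset.filter_eq', if_pos hp,
      if_pos (by simpa [and_comm] using hp),
      Finset.card_union_of_disjoint (by simpa using hswap.symm)]
    norm_num

theorem sum_sum_skewMoment (hn : Odd n) :
    ∑ p ∈ range n ×ˢ range n, ∑ q ∈ range n ×ˢ range n, skewMoment n p q =
      2 * (n : ℝ) ^ 2 - 3 * n + 2 := by
  have hsplit (p : ℕ × ℕ) :
      (if p.1 + p.2 = n - 1 then (-1 : ℝ) ^ p.1 else if p.1 = p.2 then 1 else 2) =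
        (if p.1 + p.2 = n - 1 then (-1) ^ p.1 - 2 + (if p.1 = p.2 then 1 else 0) else 0) +
          (2 - if p.1 = p.2 then 1 else 0) := by
    split_ifs <;> ring
  have hmid : ∑ j ∈ range n, (if j = n - 1 - j then (1 : ℝ) else 0) = 1 := by
    obtain ⟨m, rfl⟩ := hn
    rw [Finset.sum_congr rfl fun j _ => if_congr (by omega : j = 2 * m + 1 - 1 - j ↔ j = m) rfl rfl,
      Finset.sum_ite_eq', if_pos (mem_range.mpr (by omega))]
  have hdiag : ∑ p ∈ range n ×ˢ range n, (if p.1 = p.2 then (1 : ℝ) else 0) = n := by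
    rw [Finset.sum_product, Finset.sum_congr rfl fun i hi => by rw [Finset.sum_ite_eq, if_pos hi]]
    simp
  rw [Finset.sum_congr rfl fun p hp => sum_skewMoment_right hn hp]
  simp only [hsplit, Finset.sum_add_distrib, sum_range_prod_ite_antidiagonal,
    Finset.sum_sub_distrib, hmid, hdiag, sum_range_neg_one_pow_of_odd hn]
  simp only [sum_const, card_product, card_range, nsmul_eq_mul]
  push_cast
  ring

end SkewCoefficients

/-- For `f` drawn uniformly at random from the skew-symmetric Littlewood polynomials of
odd length `n`, `E(‖f‖₄⁴) = 2n² - 3n + 2`. -/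
theorem stmt_15 (n : ℕ) (hodd : Odd n) :
    (1 / 2 ^ ((n + 1) / 2) : ℝ) *
        ∑ f : Fin ((n + 1) / 2) → Bool, L4pow4 n (skewCoef n f) =
      2 * (n : ℝ) ^ 2 - 3 * n + 2 := by
  have hsum : ∑ f : Fin ((n + 1) / 2) → Bool, L4pow4 n (skewCoef n f) =
      2 ^ ((n + 1) / 2) * (2 * (n : ℝ) ^ 2 - 3 * n + 2) := by
    simp only [L4pow4_eq_sum]
    rw [Finset.sum_comm]
    simp only [Finset.sum_comm (s := univ)]
    rw [Finset.sum_congr rfl fun p hp => Finset.sum_congr rfl fun q hq =>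
        sum_skewCoef_mul_four hodd hp hq]
    simp only [← Finset.mul_sum, sum_sum_skewMoment hodd]
  rw [hsum, one_div, inv_mul_cancel_left₀ (by positivity)]
end
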